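/- Let V be a generalized Eulerian A_n(K)-module and let 1 ≤ r ≤ n. Then for every ν ≥ 0, the shifted partial de Rham cohomology module H^ν(∂_r, ∂_{r+1}, …, ∂_n ; V)(−n + r − 1) is a generalized Eulerian A_{r−1}(K)-module. -/
import Mathlib

/-! ### The Weyl algebra `A_n(K)` as a quotient of the free algebra. -/

/-- The defining relations of the `n`-th Weyl algebra: the `X_i` commute, the `∂_i` commute,
and `∂_i X_j = X_j ∂_i + δ_{ij}`. -/
inductive WeylRel (K : Type) [Field K] (n : ℕ) :
    FreeAlgebra K (Fin n ⊕ Fin n) → FreeAlgebra K (Fin n ⊕ Fin n) → Prop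
  | xx (i j : Fin n) : WeylRel K n
      (FreeAlgebra.ι K (Sum.inl i) * FreeAlgebra.ι K (Sum.inl j))
      (FreeAlgebra.ι K (Sum.inl j) * FreeAlgebra.ι K (Sum.inl i))
  | dd (i j : Fin n) : WeylRel K n
      (FreeAlgebra.ι K (Sum.inr i) * FreeAlgebra.ι K (Sum.inr j))
      (FreeAlgebra.ι K (Sum.inr j) * FreeAlgebra.ι K (Sum.inr i))
  | dx (i j : Fin n) : WeylRel K n
      (FreeAlgebra.ι K (Sum.inr i) * FreeAlgebra.ι K (Sum.inl j))
      (FreeAlgebra.ι K (Sum.inl j) * FreeAlgebra.ι K (Sum.inr i) + if i = j then 1 else 0)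

/-- The `n`-th Weyl algebra over `K`. -/
abbrev WeylAlgebra (K : Type) [Field K] (n : ℕ) : Type := RingQuot (WeylRel K n)

/-- The variable `X_i` (degree `+1`) in the Weyl algebra. -/
noncomputable def Wx (K : Type) [Field K] {n : ℕ} (i : Fin n) : WeylAlgebra K n :=
  RingQuot.mkAlgHom K (WeylRel K n) (FreeAlgebra.ι K (Sum.inl i))

/-- The partial derivative `∂_i` (degree `-1`) in the Weyl algebra. -/
noncomputable def Wd (K : Type) [Field K] {n : ℕ} (i : Fin n) : WeylAlgebra K n :=
  RingQuot.mkAlgHom K (WeylRel K n) (FreeAlgebra.ι K (Sum.inr i))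

/-- The Euler operator `ℰ_n = ∑ X_i ∂_i`. -/
noncomputable def weylEuler (K : Type) [Field K] (n : ℕ) : WeylAlgebra K n :=
  ∑ i : Fin n, Wx K i * Wd K i

/-- The Euler operator `ℰ_r = ∑_{i < r} X_i ∂_i` of the subalgebra `A_r(K) ⊆ A_n(K)`. -/
noncomputable def weylEulerUpTo (K : Type) [Field K] (n r : ℕ) : WeylAlgebra K n :=
  ∑ i ∈ Finset.univ.filter (fun i : Fin n => (i : ℕ) < r), Wx K i * Wd K i

/-- Monomials of degree `d` in the variables `X_1, …, X_n` inside the Weyl algebra. -/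
def xMonomials (K : Type) [Field K] (n d : ℕ) : Set (WeylAlgebra K n) :=
  {w | ∃ l : List (Fin n), l.length = d ∧ w = (l.map (Wx K)).prod}

/-- `f` is a homogeneous polynomial of degree `d` in `R = K[X_1, …, X_n] ⊆ A_n(K)`. -/
def IsHomogPoly (K : Type) [Field K] {n : ℕ} (f : WeylAlgebra K n) (d : ℕ) : Prop :=
  f ∈ Submodule.span K (xMonomials K n d)

/-! ### Graded (left) modules over the Weyl algebra. -/

/-- A graded left `A_n(K)`-module: a module over the Weyl algebra together with an internal
`ℤ`-grading, stable under `K` and such that `X_i` raises degree by one and `∂_i` lowers it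
by one. -/
structure GWM (K : Type) [Field K] (n : ℕ) where
  carrier : Type
  [acg : AddCommGroup carrier]
  [mod : Module (WeylAlgebra K n) carrier]
  deg : ℤ → AddSubgroup carrier
  isInternal : DirectSum.IsInternal deg
  k_smul : ∀ (c : K) (j : ℤ) (m : carrier), m ∈ deg j →
    algebraMap K (WeylAlgebra K n) c • m ∈ deg j
  x_smul : ∀ (i : Fin n) (j : ℤ) (m : carrier), m ∈ deg j → Wx K i • m ∈ deg (j + 1)
  d_smul : ∀ (i : Fin n) (j : ℤ) (m : carrier), m ∈ deg j → Wd K i • m ∈ deg (j - 1)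

attribute [instance] GWM.acg GWM.mod

instance {K : Type} [Field K] {n : ℕ} : CoeSort (GWM K n) Type := ⟨GWM.carrier⟩

/-- A graded `A_n(K)`-module is *generalized Eulerian* if every homogeneous element `z`
is killed by some power of `ℰ_n - |z|`. -/
def GWM.IsGenEulerian {K : Type} [Field K] {n : ℕ} (M : GWM K n) : Prop :=
  ∀ (j : ℤ) (m : M.carrier), m ∈ M.deg j →
    ∃ a : ℕ, 1 ≤ a ∧ ((weylEuler K n - (j : WeylAlgebra K n)) ^ a) • m = 0

/-- A graded module is concentrated in degree `d` if all other graded pieces vanish. -/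
def GWM.ConcentratedIn {K : Type} [Field K] {n : ℕ} (M : GWM K n) (d : ℤ) : Prop :=
  ∀ j : ℤ, j ≠ d → M.deg j = ⊥

/-! ### Koszul (co)homology of a graded module with respect to commuting operators.

The Koszul complex of operators `u : Fin c → A_n(K)` on `M` has, in homological level `i`,
the module of functions from `i`-element subsets of `Fin c` to `M`.  Cohomology `H^ν` is
homology in level `c - ν`. -/

/-- Level `i` of the Koszul complex on `c` operators with values in `M`. -/
abbrev KosLevel {K : Type} [Field K] {n : ℕ} (M : GWM K n) (c : ℕ) (i : ℤ) : Type :=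
  {S : Finset (Fin c) // (S.card : ℤ) = i} → M.carrier

/-- The Koszul differential (from level `a` to level `b`; it is the genuine differential
when `b = a - 1`): `(dψ)(T) = ∑_{k ∉ T} (-1)^{|{x ∈ T | x < k}|} u_k • ψ(T ∪ {k})`. -/
noncomputable def kosDiff {K : Type} [Field K] {n : ℕ} {M : GWM K n} {c : ℕ}
    (u : Fin c → WeylAlgebra K n) (a b : ℤ) (ψ : KosLevel M c a)
    (T : {S : Finset (Fin c) // (S.card : ℤ) = b}) : M.carrier :=
  ∑ k ∈ (T.1)ᶜ, ((-1 : ℤ) ^ ((T.1.filter (fun x => x < k)).card)) •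
    (u k • (if h : (((insert k T.1).card : ℤ)) = a then ψ ⟨insert k T.1, h⟩ else 0))

/-- A Koszul `i`-chain is a cycle if the differential to level `i - 1` kills it. -/
def kosIsCycle {K : Type} [Field K] {n : ℕ} {M : GWM K n} {c : ℕ}
    (u : Fin c → WeylAlgebra K n) (i : ℤ) (φ : KosLevel M c i) : Prop :=
  ∀ T, kosDiff u i (i - 1) φ T = 0

/-- A Koszul `i`-chain is a boundary if it is the image of an `(i+1)`-chain. -/
def kosIsBoundary {K : Type} [Field K] {n : ℕ} {M : GWM K n} {c : ℕ}
    (u : Fin c → WeylAlgebra K n) (i : ℤ) (φ : KosLevel M c i) : Prop :=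
  ∃ ψ : KosLevel M c (i + 1), (fun T => kosDiff u (i + 1) i ψ T) = φ

/-- A Koszul `i`-chain is homogeneous of (internal) degree `j`: on a subset `S` its value
lies in degree `j - ∑_{k ∈ S} deg u_k`, where `du k` is the degree of the operator `u k`. -/
def kosHomog {K : Type} [Field K] {n : ℕ} {M : GWM K n} {c : ℕ}
    (du : Fin c → ℤ) (i j : ℤ) (φ : KosLevel M c i) : Prop :=
  ∀ S : {S : Finset (Fin c) // (S.card : ℤ) = i}, φ S ∈ M.deg (j - ∑ k ∈ S.1, du k)

section WAlg
variable {K : Type} [Field K] {n : ℕ}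

lemma wdx (i j : Fin n) : Wd K i * Wx K j = Wx K j * Wd K i + if i = j then 1 else 0 := by
  have h := RingQuot.mkAlgHom_rel K (WeylRel.dx (K := K) (n := n) i j)
  simp only [map_mul, map_add] at h
  rw [Wd, Wx, h]
  congr 1
  split <;> simp

lemma wdd (i j : Fin n) : Wd K i * Wd K j = Wd K j * Wd K i := by
  have h := RingQuot.mkAlgHom_rel K (WeylRel.dd (K := K) (n := n) i j)
  simp only [map_mul] at h
  rw [Wd, Wd, h]

lemma wdx_ne {i j : Fin n} (h : i ≠ j) : Wd K i * Wx K j = Wx K j * Wd K i := by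
  rw [wdx, if_neg h, add_zero]

lemma wdx_self (i : Fin n) : Wd K i * Wx K i = Wx K i * Wd K i + 1 := by
  rw [wdx, if_pos rfl]

lemma wd_xd_comm {m l : Fin n} (h : m ≠ l) :
    Wd K m * (Wx K l * Wd K l) = (Wx K l * Wd K l) * Wd K m := by
  rw [← mul_assoc, wdx_ne h, mul_assoc, wdd, ← mul_assoc]

lemma wd_xd_self (m : Fin n) :
    Wd K m * (Wx K m * Wd K m) = (Wx K m * Wd K m) * Wd K m + Wd K m := by
  rw [← mul_assoc, wdx_self, add_mul, one_mul]

lemma wd_euler (m : Fin n) :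
    Wd K m * weylEuler K n = weylEuler K n * Wd K m + Wd K m := by
  have key : ∀ l : Fin n, Wd K m * (Wx K l * Wd K l)
      = Wx K l * Wd K l * Wd K m + if l = m then Wd K m else 0 := by
    intro l
    by_cases hl : l = m
    · subst hl; rw [wd_xd_self, if_pos rfl]
    · rw [wd_xd_comm (Ne.symm hl), if_neg hl, add_zero]
  rw [weylEuler, Finset.mul_sum]
  simp_rw [key]
  rw [Finset.sum_add_distrib, Finset.sum_ite_eq' Finset.univ m (fun _ => Wd K m),
    if_pos (Finset.mem_univ m), ← Finset.sum_mul]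

lemma wd_eulerUpTo {m : Fin n} {s : ℕ} (h : ¬ (m : ℕ) < s) :
    Wd K m * weylEulerUpTo K n s = weylEulerUpTo K n s * Wd K m := by
  rw [weylEulerUpTo, Finset.mul_sum, Finset.sum_mul]
  apply Finset.sum_congr rfl
  intro l hl
  have hl' : (l : ℕ) < s := (Finset.mem_filter.mp hl).2
  exact wd_xd_comm (by rintro rfl; exact h hl')

end WAlg

section KosTotal
variable {K : Type} [Field K] {n : ℕ} {M : GWM K n} {c : ℕ}

/-- The extension of a Koszul chain to a total function on `Finset (Fin c)`. -/
noncomputable def extFun (a : ℤ) (ψ : KosLevel M c a) : Finset (Fin c) → M.carrier :=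
  fun S => if h : ((S.card : ℤ)) = a then ψ ⟨S, h⟩ else 0

/-- The Koszul differential on total functions. -/
noncomputable def DFun (u : Fin c → WeylAlgebra K n) (f : Finset (Fin c) → M.carrier)
    (T : Finset (Fin c)) : M.carrier :=
  ∑ k ∈ Tᶜ, ((-1 : ℤ) ^ ((T.filter (fun x => x < k)).card)) • (u k • f (insert k T))

/-- The homotopy operator on total functions. -/
noncomputable def EFun (v : Fin c → WeylAlgebra K n) (f : Finset (Fin c) → M.carrier)
    (S : Finset (Fin c)) : M.carrier :=
  ∑ m ∈ S, ((-1 : ℤ) ^ ((S.filter (fun x => x < m)).card)) • (v m • f (S.erase m))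

lemma kosDiff_eq_DFun (u : Fin c → WeylAlgebra K n) (a b : ℤ) (ψ : KosLevel M c a)
    (T : {S : Finset (Fin c) // (S.card : ℤ) = b}) :
    kosDiff u a b ψ T = DFun u (extFun a ψ) T.1 := rfl

lemma DFun_congr (u : Fin c → WeylAlgebra K n) {f g : Finset (Fin c) → M.carrier}
    (T : Finset (Fin c)) (h : ∀ k ∈ Tᶜ, f (insert k T) = g (insert k T)) :
    DFun u f T = DFun u g T := by
  unfold DFun
  exact Finset.sum_congr rfl fun k hk => by rw [h k hk]

lemma DFun_add (u : Fin c → WeylAlgebra K n) (f g : Finset (Fin c) → M.carrier)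
    (T : Finset (Fin c)) : DFun u (f + g) T = DFun u f T + DFun u g T := by
  unfold DFun
  rw [← Finset.sum_add_distrib]
  exact Finset.sum_congr rfl fun k _ => by simp [smul_add]

lemma DFun_neg (u : Fin c → WeylAlgebra K n) (f : Finset (Fin c) → M.carrier)
    (T : Finset (Fin c)) : DFun u (-f) T = -DFun u f T := by
  unfold DFun
  rw [← Finset.sum_neg_distrib]
  exact Finset.sum_congr rfl fun k _ => by simp

lemma DFun_conj {u : Fin c → WeylAlgebra K n} {x y : WeylAlgebra K n}
    (h : ∀ k, u k * x = y * u k) (f : Finset (Fin c) → M.carrier) (T : Finset (Fin c)) :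
    DFun u (x • f) T = y • DFun u f T := by
  unfold DFun
  rw [Finset.smul_sum]
  refine Finset.sum_congr rfl fun k _ => ?_
  rw [Pi.smul_apply, ← mul_smul, h k, mul_smul, smul_comm]

end KosTotal

section Homotopy
variable {K : Type} [Field K] {n : ℕ} {M : GWM K n} {c : ℕ}

lemma kos_homotopy (u v : Fin c → WeylAlgebra K n)
    (huv : ∀ k, u k * v k = v k * u k + 1)
    (huv2 : ∀ k l, k ≠ l → u k * v l = v l * u k)
    (f : Finset (Fin c) → M.carrier) (T : Finset (Fin c)) :
    DFun u (EFun v f) T + EFun v (DFun u f) T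
      = (∑ k : Fin c, v k * u k) • f T + ((Tᶜ.card : ℤ)) • f T := by
  have L1 : DFun u (EFun v f) T = ∑ k ∈ Tᶜ, ∑ m ∈ insert k T,
      (((-1 : ℤ) ^ ((T.filter (fun x => x < k)).card)) *
       ((-1 : ℤ) ^ (((insert k T).filter (fun x => x < m)).card))) •
        ((u k * v m) • f ((insert k T).erase m)) := by
    unfold DFun EFun
    refine Finset.sum_congr rfl fun k _ => ?_
    rw [Finset.smul_sum, Finset.smul_sum]
    refine Finset.sum_congr rfl fun m _ => ?_
    rw [smul_comm (u k), smul_smul, ← mul_smul (u k) (v m)]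
  have L2 : EFun v (DFun u f) T = ∑ m ∈ T, ∑ k ∈ (T.erase m)ᶜ,
      (((-1 : ℤ) ^ ((T.filter (fun x => x < m)).card)) *
       ((-1 : ℤ) ^ (((T.erase m).filter (fun x => x < k)).card))) •
        ((v m * u k) • f (insert k (T.erase m))) := by
    unfold DFun EFun
    refine Finset.sum_congr rfl fun m _ => ?_
    rw [Finset.smul_sum, Finset.smul_sum]
    refine Finset.sum_congr rfl fun k _ => ?_
    rw [smul_comm (v m), smul_smul, ← mul_smul (v m) (u k)]
  -- split the inner sums
  have split1 : ∀ k ∈ Tᶜ, ∑ m ∈ insert k T,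
      (((-1 : ℤ) ^ ((T.filter (fun x => x < k)).card)) *
       ((-1 : ℤ) ^ (((insert k T).filter (fun x => x < m)).card))) •
        ((u k * v m) • f ((insert k T).erase m))
      = ((v k * u k) • f T + f T) + ∑ m ∈ T,
      (((-1 : ℤ) ^ ((T.filter (fun x => x < k)).card)) *
       ((-1 : ℤ) ^ (((insert k T).filter (fun x => x < m)).card))) •
        ((u k * v m) • f ((insert k T).erase m)) := by
    intro k hk
    have hk' : k ∉ T := Finset.mem_compl.mp hk
    rw [Finset.sum_insert hk']
    congr 1
    rw [Finset.erase_insert hk', Finset.filter_insert, if_neg (lt_irrefl k),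
      ← pow_add, Even.neg_one_pow ⟨_, rfl⟩, one_smul, huv k, add_smul, one_smul]
  have split2 : ∀ m ∈ T, ∑ k ∈ (T.erase m)ᶜ,
      (((-1 : ℤ) ^ ((T.filter (fun x => x < m)).card)) *
       ((-1 : ℤ) ^ (((T.erase m).filter (fun x => x < k)).card))) •
        ((v m * u k) • f (insert k (T.erase m)))
      = (v m * u m) • f T + ∑ k ∈ Tᶜ,
      (((-1 : ℤ) ^ ((T.filter (fun x => x < m)).card)) *
       ((-1 : ℤ) ^ (((T.erase m).filter (fun x => x < k)).card))) •
        ((v m * u k) • f (insert k (T.erase m))) := by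
    intro m hm
    have hcompl : (T.erase m)ᶜ = insert m Tᶜ := by
      ext x
      simp only [Finset.mem_compl, Finset.mem_erase, Finset.mem_insert]
      by_cases hx : x = m <;> simp [hx]
    have hm' : m ∉ Tᶜ := by simpa using hm
    rw [hcompl, Finset.sum_insert hm']
    congr 1
    rw [Finset.insert_erase hm, Finset.filter_erase,
      Finset.erase_eq_of_notMem (by simp), ← pow_add,
      Even.neg_one_pow ⟨_, rfl⟩, one_smul]
  have cancel : (∑ k ∈ Tᶜ, ∑ m ∈ T,
      (((-1 : ℤ) ^ ((T.filter (fun x => x < k)).card)) *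
       ((-1 : ℤ) ^ (((insert k T).filter (fun x => x < m)).card))) •
        ((u k * v m) • f ((insert k T).erase m)))
      + ∑ m ∈ T, ∑ k ∈ Tᶜ,
      (((-1 : ℤ) ^ ((T.filter (fun x => x < m)).card)) *
       ((-1 : ℤ) ^ (((T.erase m).filter (fun x => x < k)).card))) •
        ((v m * u k) • f (insert k (T.erase m))) = 0 := by
    rw [Finset.sum_comm (s := T), ← Finset.sum_add_distrib]
    refine Finset.sum_eq_zero fun k hk => ?_
    rw [← Finset.sum_add_distrib]
    refine Finset.sum_eq_zero fun m hm => ?_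
    have hk' : k ∉ T := Finset.mem_compl.mp hk
    have hkm : k ≠ m := fun h => hk' (h ▸ hm)
    have hset : (insert k T).erase m = insert k (T.erase m) :=
      Finset.erase_insert_of_ne hkm
    rw [hset, huv2 k m hkm, ← add_smul]
    convert zero_smul ℤ _
    rcases hkm.lt_or_gt with hlt | hlt
    · have h1 : ((insert k T).filter (fun x => x < m)).card
          = (T.filter (fun x => x < m)).card + 1 := by
        rw [Finset.filter_insert, if_pos hlt,
          Finset.card_insert_of_notMem (fun h => hk' (Finset.mem_filter.mp h).1)]
      have h2 : ((T.erase m).filter (fun x => x < k)).card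
          = (T.filter (fun x => x < k)).card := by
        rw [Finset.filter_erase, Finset.erase_eq_of_notMem
          (s := T.filter (fun x => x < k)) (a := m)
          (fun h => absurd (Finset.mem_filter.mp h).2 (asymm hlt))]
      rw [h1, h2, pow_succ]
      ring
    · have h1 : ((insert k T).filter (fun x => x < m)).card
          = (T.filter (fun x => x < m)).card := by
        rw [Finset.filter_insert, if_neg (asymm hlt)]
      have hpmem : m ∈ T.filter (fun x => x < k) := Finset.mem_filter.mpr ⟨hm, hlt⟩
      have hp1 : 1 ≤ (T.filter (fun x => x < k)).card := Finset.card_pos.mpr ⟨m, hpmem⟩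
      have h2 : ((T.erase m).filter (fun x => x < k)).card
          = (T.filter (fun x => x < k)).card - 1 := by
        rw [Finset.filter_erase, Finset.card_erase_of_mem hpmem]
      rw [h1, h2]
      generalize hP : (T.filter (fun x => x < k)).card = p at hp1
      obtain ⟨p', rfl⟩ : ∃ p', p = p' + 1 := ⟨p - 1, by omega⟩
      rw [Nat.add_sub_cancel, pow_succ]
      ring
  rw [L1, L2, Finset.sum_congr rfl split1, Finset.sum_congr rfl split2]
  simp only [Finset.sum_add_distrib]
  have e1 : ∑ k ∈ Tᶜ, (v k * u k) • f T = (∑ k ∈ Tᶜ, v k * u k) • f T :=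
    (Finset.sum_smul).symm
  have e2 : (∑ _k ∈ Tᶜ, f T) = ((Tᶜ.card : ℤ)) • f T := by
    rw [Finset.sum_const, natCast_zsmul]
  have diag2 : ∑ m ∈ T, (v m * u m) • f T = (∑ m ∈ T, v m * u m) • f T :=
    (Finset.sum_smul).symm
  have hsum : (∑ k ∈ Tᶜ, v k * u k) • f T + (∑ m ∈ T, v m * u m) • f T
      = (∑ k : Fin c, v k * u k) • f T := by
    rw [← add_smul, ← Finset.sum_add_sum_compl T (fun k => v k * u k), add_comm]
  rw [e1, e2, diag2, ← hsum]
  have rearr : ∀ a b c d e : M.carrier, a + b + c + (d + e) = a + d + b + (c + e) :=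
    fun a b c d e => by abel
  rw [rearr, cancel, add_zero]

end Homotopy

section Bridge
variable {K : Type} [Field K] {n : ℕ} {M : GWM K n} {c : ℕ}

/-- extension vanishes off the right cardinality -/
lemma extFun_ne {a : ℤ} (ψ : KosLevel M c a) {S : Finset (Fin c)}
    (h : ((S.card : ℤ)) ≠ a) : extFun a ψ S = 0 := dif_neg h

lemma extFun_eq {a : ℤ} (ψ : KosLevel M c a) {S : Finset (Fin c)}
    (h : ((S.card : ℤ)) = a) : extFun a ψ S = ψ ⟨S, h⟩ := dif_pos h

/-- A cycle extends to a function whose total differential vanishes everywhere. -/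
lemma DFun_ext_eq_zero {u : Fin c → WeylAlgebra K n} {i : ℤ} {φ : KosLevel M c i}
    (hcyc : kosIsCycle u i φ) (T : Finset (Fin c)) :
    DFun u (extFun i φ) T = 0 := by
  by_cases hT : ((T.card : ℤ)) = i - 1
  · exact hcyc ⟨T, hT⟩
  · refine Finset.sum_eq_zero fun k hk => ?_
    have hk' : k ∉ T := Finset.mem_compl.mp hk
    rw [extFun_ne φ (by rw [Finset.card_insert_of_notMem hk']; push_cast; omega),
      smul_zero, smul_zero]

/-- supported functions stay supported under scalar action -/
lemma smul_supported {i : ℤ} {f : Finset (Fin c) → M.carrier}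
    (hf : ∀ S : Finset (Fin c), ((S.card : ℤ)) ≠ i → f S = 0)
    (x : WeylAlgebra K n) (S : Finset (Fin c)) (h : ((S.card : ℤ)) ≠ i) :
    (x • f) S = 0 := by
  rw [Pi.smul_apply, hf S h, smul_zero]

/-- key step: for a supported cycle `g`, `E g` is a "primitive" of
`(∑ v*u + (c - i)) • g`. -/
lemma kos_Bstep (u v : Fin c → WeylAlgebra K n)
    (huv : ∀ k, u k * v k = v k * u k + 1)
    (huv2 : ∀ k l, k ≠ l → u k * v l = v l * u k)
    {i : ℤ} (g : Finset (Fin c) → M.carrier)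
    (hsupp : ∀ S : Finset (Fin c), ((S.card : ℤ)) ≠ i → g S = 0)
    (hcyc : ∀ T, DFun u g T = 0) (T : Finset (Fin c)) :
    DFun u (EFun v g) T
      = (∑ k : Fin c, v k * u k) • g T + (((c : ℤ) - i) : ℤ) • g T := by
  have hzero : EFun v (DFun u g) T = 0 := by
    refine Finset.sum_eq_zero fun m _ => ?_
    rw [hcyc, smul_zero, smul_zero]
  have h := kos_homotopy u v huv huv2 g T
  rw [hzero, add_zero] at h
  by_cases hT : ((T.card : ℤ)) = i
  · rw [h]
    congr 2
    have h1 : Tᶜ.card = c - T.card := by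
      rw [Finset.card_compl, Fintype.card_fin]
    have h2 : T.card ≤ c := by
      simpa using Finset.card_le_card (Finset.subset_univ T)
    omega
  · rw [hsupp T hT, smul_zero, smul_zero, add_zero]
    refine Finset.sum_eq_zero fun k hk => ?_
    have hk' : k ∉ T := Finset.mem_compl.mp hk
    have : EFun v g (insert k T) = 0 := by
      refine Finset.sum_eq_zero fun m hm => ?_
      have : g ((insert k T).erase m) = 0 := by
        apply hsupp
        rw [Finset.card_erase_of_mem hm, Finset.card_insert_of_notMem hk']
        push_cast [Nat.add_sub_cancel]
        exact hT
      rw [this, smul_zero, smul_zero]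
    rw [this, smul_zero, smul_zero]

end Bridge

section Abstract
variable {K : Type} [Field K] {n : ℕ} {M : GWM K n} {c : ℕ}

theorem kos_abstract (u v : Fin c → WeylAlgebra K n)
    (huv : ∀ k, u k * v k = v k * u k + 1)
    (huv2 : ∀ k l, k ≠ l → u k * v l = v l * u k)
    (A w : WeylAlgebra K n)
    (hwcomm : ∀ k, u k * w = w * u k)
    (hAcomm : ∀ k, u k * A = (A + 1) * u k)
    (i : ℤ)
    (hkey : A = w + (∑ k : Fin c, v k * u k) + ((((c : ℤ) - i) : ℤ) : WeylAlgebra K n))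
    (φ : KosLevel M c i) (hcyc : kosIsCycle u i φ)
    (hkill : ∀ S : {S : Finset (Fin c) // ((S.card : ℤ)) = i}, ∃ b : ℕ, (A ^ b) • φ S = 0) :
    ∃ a : ℕ, 1 ≤ a ∧ kosIsBoundary u i ((w ^ a) • φ) := by
  set f : Finset (Fin c) → M.carrier := extFun i φ with hf
  have hf0 : ∀ S : Finset (Fin c), ((S.card : ℤ)) ≠ i → f S = 0 := fun S h => extFun_ne φ h
  have hcycF : ∀ T, DFun u f T = 0 := DFun_ext_eq_zero hcyc
  -- powers of A applied to f are still (total) cycles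
  have hAs : ∀ s : ℕ, ∀ T, DFun u ((A ^ s) • f) T = 0 := by
    intro s
    induction s with
    | zero => intro T; rw [pow_zero, one_smul]; exact hcycF T
    | succ s ih =>
        intro T
        have : (A ^ (s + 1)) • f = A • ((A ^ s) • f) := by
          rw [← mul_smul, ← pow_succ']
        rw [this, DFun_conj hAcomm, ih, smul_zero]
  have hAsupp : ∀ s : ℕ, ∀ S : Finset (Fin c), ((S.card : ℤ)) ≠ i →
      ((A ^ s) • f) S = 0 := fun s S h => smul_supported hf0 _ S h
  -- the key induction: w^a • f agrees with A^a • f up to an explicit boundary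
  have claim : ∀ a : ℕ, ∃ χ : Finset (Fin c) → M.carrier,
      ∀ T : Finset (Fin c), (w ^ a) • f T = (A ^ a) • f T - DFun u χ T := by
    intro a
    induction a with
    | zero =>
        refine ⟨fun _ => 0, fun T => ?_⟩
        have hz : DFun u (fun _ => (0 : M.carrier)) T = 0 :=
          Finset.sum_eq_zero fun k _ => by rw [smul_zero, smul_zero]
        rw [pow_zero, pow_zero, hz, sub_zero]
    | succ a ih =>
        obtain ⟨χ, hχ⟩ := ih
        refine ⟨EFun v ((A ^ a) • f) + w • χ, fun T => ?_⟩
        have hstep : w • ((A ^ a) • f T) = A • ((A ^ a) • f T)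
            - DFun u (EFun v ((A ^ a) • f)) T := by
          have hB := kos_Bstep u v huv huv2 ((A ^ a) • f) (hAsupp a) (hAs a) T
          rw [show ((A ^ a • f) T) = (A ^ a) • f T from rfl] at hB
          have hAw : A - w = (∑ k : Fin c, v k * u k)
              + ((((c : ℤ) - i) : ℤ) : WeylAlgebra K n) := by
            rw [hkey]; abel
          have hsub : A • ((A ^ a) • f T) - w • ((A ^ a) • f T)
              = DFun u (EFun v ((A ^ a) • f)) T := by
            rw [← sub_smul, hAw, add_smul, Int.cast_smul_eq_zsmul, hB]
          rw [← hsub]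
          abel
        calc (w ^ (a + 1)) • f T = w • ((w ^ a) • f T) := by
              rw [← mul_smul, ← pow_succ']
          _ = w • ((A ^ a) • f T) - w • DFun u χ T := by rw [hχ T, smul_sub]
          _ = A • ((A ^ a) • f T) - DFun u (EFun v ((A ^ a) • f)) T
              - DFun u (w • χ) T := by rw [hstep, DFun_conj hwcomm]
          _ = (A ^ (a + 1)) • f T
              - DFun u (EFun v ((A ^ a) • f) + w • χ) T := by
              rw [DFun_add, ← mul_smul, ← pow_succ']
              abel
  -- choose `a` killing `A^a • f` everywhere
  have hkill' : ∀ S : Finset (Fin c), ∃ b : ℕ, (A ^ b) • f S = 0 := by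
    intro S
    by_cases hS : ((S.card : ℤ)) = i
    · obtain ⟨b, hb⟩ := hkill ⟨S, hS⟩
      exact ⟨b, by rw [hf, extFun_eq φ hS]; exact hb⟩
    · exact ⟨0, by rw [hf, extFun_ne φ hS, smul_zero]⟩
  choose b hb using hkill'
  refine ⟨1 + ∑ S : Finset (Fin c), b S, Nat.le_add_right 1 _, ?_⟩
  set a : ℕ := 1 + ∑ S : Finset (Fin c), b S with ha
  have hkillall : ∀ S : Finset (Fin c), (A ^ a) • f S = 0 := by
    intro S
    have hble : b S ≤ a := by
      have := Finset.single_le_sum (f := b) (fun _ _ => Nat.zero_le _) (Finset.mem_univ S)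
      omega
    obtain ⟨d, hd⟩ : ∃ d, a = d + b S := ⟨a - b S, by omega⟩
    rw [hd, pow_add, mul_smul, hb S, smul_zero]
  obtain ⟨χ, hχ⟩ := claim a
  refine ⟨fun S => -χ S.1, ?_⟩
  funext T
  have h1 : kosDiff u (i + 1) i (fun S : {S : Finset (Fin c) // ((S.card : ℤ)) = i + 1} =>
      -χ S.1) T = DFun u (-χ) T.1 := by
    rw [kosDiff_eq_DFun]
    refine DFun_congr u T.1 fun k hk => ?_
    have hk' : k ∉ T.1 := Finset.mem_compl.mp hk
    have hcard : (((insert k T.1).card : ℤ)) = i + 1 := by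
      rw [Finset.card_insert_of_notMem hk']
      push_cast
      rw [T.2]
    rw [extFun_eq _ hcard]
    rfl
  rw [h1, DFun_neg]
  have h2 := hχ T.1
  rw [hkillall T.1] at h2
  have h3 : f T.1 = φ T := by rw [hf, extFun_eq φ T.2]
  rw [h3] at h2
  have h4 : ((w ^ a) • φ) T = (w ^ a) • φ T := rfl
  rw [h4, h2]
  abel

end Abstract


/-- Theorem `induct`(1).  Let `V` be a generalized Eulerian
`A_n(K)`-module and `1 ≤ r ≤ n`.  Then for every `ν ≥ 0` the shifted partial de Rham
cohomology `H^ν(∂_r, …, ∂_n; V)(-n + r - 1)` is a generalized Eulerian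
`A_{r-1}(K)`-module.  Here `H^ν` of the Koszul complex on the `c = n - r + 1` commuting
operators `∂_r, …, ∂_n` (each of degree `-1`) is its homology in level `c - ν`; an element
of internal degree `j` of the shifted module is a class of internal degree
`j + (-n + r - 1)`, and the generalized Eulerian condition (over `A_{r-1}(K)`, with Euler
operator `ℰ_{r-1}`) says some power of `ℰ_{r-1} - j` maps it into the boundaries. -/
theorem partial_deRham_shifted_is_generalizedEulerian
    (K : Type) [Field K] [CharZero K] (n r : ℕ) (hr : 1 ≤ r) (hrn : r ≤ n)
    (V : GWM K n) (hV : V.IsGenEulerian) (ν : ℕ) (j : ℤ)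
    (φ : KosLevel V (n - r + 1) (((n - r + 1 : ℕ) : ℤ) - (ν : ℤ)))
    (hcyc : kosIsCycle
      (fun k : Fin (n - r + 1) => Wd K ⟨r - 1 + (k : ℕ), by have := k.isLt; omega⟩)
      (((n - r + 1 : ℕ) : ℤ) - (ν : ℤ)) φ)
    (hhom : kosHomog (fun _ : Fin (n - r + 1) => (-1 : ℤ))
      (((n - r + 1 : ℕ) : ℤ) - (ν : ℤ)) (j + (-(n : ℤ) + (r : ℤ) - 1)) φ) :
    ∃ a : ℕ, 1 ≤ a ∧ kosIsBoundary
      (fun k : Fin (n - r + 1) => Wd K ⟨r - 1 + (k : ℕ), by have := k.isLt; omega⟩)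
      (((n - r + 1 : ℕ) : ℤ) - (ν : ℤ))
      (((weylEulerUpTo K n (r - 1) - (j : WeylAlgebra K n)) ^ a) • φ) := by
  have hι : ∀ k : Fin (n - r + 1), r - 1 + (k : ℕ) < n := fun k => by
    have := k.isLt; omega
  refine kos_abstract
    (fun k : Fin (n - r + 1) => Wd K ⟨r - 1 + (k : ℕ), hι k⟩)
    (fun k : Fin (n - r + 1) => Wx K ⟨r - 1 + (k : ℕ), hι k⟩)
    (fun k => wdx_self _) ?_
    (weylEuler K n - ((j - (ν : ℤ) : ℤ) : WeylAlgebra K n))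
    (weylEulerUpTo K n (r - 1) - (j : WeylAlgebra K n))
    ?_ ?_ _ ?_ φ hcyc ?_
  · -- huv2
    intro k l hkl
    refine wdx_ne ?_
    intro heq
    apply hkl
    have := congrArg Fin.val heq
    simp only at this
    exact Fin.ext (by omega)
  · -- hwcomm
    intro k
    rw [mul_sub, sub_mul]
    congr 1
    · exact wd_eulerUpTo (show ¬ r - 1 + (k : ℕ) < r - 1 by omega)
    · exact ((Int.cast_commute (j : ℤ) (Wd K ⟨r - 1 + (k : ℕ), hι k⟩)).eq).symm
  · -- hAcomm
    have base : ∀ m : Fin n,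
        Wd K m * (weylEuler K n - ((j - (ν : ℤ) : ℤ) : WeylAlgebra K n))
        = ((weylEuler K n - ((j - (ν : ℤ) : ℤ) : WeylAlgebra K n)) + 1) * Wd K m := by
      intro m
      rw [mul_sub, wd_euler, ← (Int.cast_commute ((j - (ν : ℤ) : ℤ)) (Wd K m)).eq,
        add_mul, sub_mul, one_mul]
      abel
    exact fun k => base _
  · -- hkey
    have hsplit : weylEuler K n = weylEulerUpTo K n (r - 1)
        + ∑ k : Fin (n - r + 1),
            Wx K ⟨r - 1 + (k : ℕ), hι k⟩ * Wd K ⟨r - 1 + (k : ℕ), hι k⟩ := by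
      rw [weylEuler, weylEulerUpTo,
        ← Finset.sum_filter_add_sum_filter_not Finset.univ
          (fun i : Fin n => (i : ℕ) < r - 1) (fun i => Wx K i * Wd K i)]
      congr 1
      refine Finset.sum_bij'
        (fun (l : Fin n) (_ : l ∈ Finset.univ.filter (fun i : Fin n => ¬ (i : ℕ) < r - 1))
          => (⟨(l : ℕ) - (r - 1), by have := l.isLt; omega⟩ : Fin (n - r + 1)))
        (fun (k : Fin (n - r + 1)) (_ : k ∈ Finset.univ)
          => (⟨r - 1 + (k : ℕ), hι k⟩ : Fin n)) ?_ ?_ ?_ ?_ ?_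
      · intro l hl; exact Finset.mem_univ _
      · intro k _
        simp only [Finset.mem_filter, Finset.mem_univ, true_and]
        exact (by omega : ¬ r - 1 + (k : ℕ) < r - 1)
      · intro l hl
        have hl' : ¬ (l : ℕ) < r - 1 := (Finset.mem_filter.mp hl).2
        exact Fin.ext (show r - 1 + ((l : ℕ) - (r - 1)) = (l : ℕ) by omega)
      · intro k _
        exact Fin.ext (show r - 1 + (k : ℕ) - (r - 1) = (k : ℕ) by omega)
      · intro l hl
        have hl' : ¬ (l : ℕ) < r - 1 := (Finset.mem_filter.mp hl).2
        exact congrArg (fun m : Fin n => Wx K m * Wd K m)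
          (Fin.ext (show (l : ℕ) = r - 1 + ((l : ℕ) - (r - 1)) by omega))
    rw [show ((((n - r + 1 : ℕ) : ℤ) - (((n - r + 1 : ℕ) : ℤ) - (ν : ℤ))) : ℤ)
        = ((ν : ℕ) : ℤ) from by ring]
    rw [hsplit]
    push_cast
    abel
  · -- hkill
    intro S
    have hmem := hhom S
    have harith : (j + (-(n : ℤ) + (r : ℤ) - 1)) - (∑ _k ∈ S.1, (-1 : ℤ))
        = j - (ν : ℤ) := by
      rw [Finset.sum_const]
      have h2 := S.2
      simp only [nsmul_eq_mul, mul_neg, mul_one]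
      omega
    rw [harith] at hmem
    obtain ⟨b, _, hb⟩ := hV (j - (ν : ℤ)) (φ S) hmem
    exact ⟨b, hb⟩
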